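/- arXiv:1904.02349 — 4 statements merged into one kernel-verified Lean document; each statement's English description precedes it below -/
import Mathlib

section
/- Let 𝔓 be a prime ideal of O_K lying above 2 with 𝔓 ∤ A·B·C, and suppose v_𝔓(b) ≥ 1 while v_𝔓(a) = v_𝔓(c) = 0. Then the j-invariant j of the Frey curve satisfies v_𝔓(j) = 8·v_𝔓(2) − 2p·v_𝔓(b); in particular, if p > 4·v_𝔓(2) then v_𝔓(j) < 0. -/
open NumberField

open scoped Classical in
/-- The additive (normalized) `P`-adic valuation on a number field `K`, with `v_P(0) = 0`
by convention. -/
noncomputable def addVal {K : Type*} [Field K] [NumberField K]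
    (P : IsDedekindDomain.HeightOneSpectrum (𝓞 K)) (x : K) : ℤ :=
  if hx : x = 0 then 0
  else - Multiplicative.toAdd (WithZero.unzero ((P.valuation (K := K)).ne_zero_iff.mpr hx))

/-- The Frey curve `Y² = X (X - A aᵖ) (X + B bᵖ)`, written in standard Weierstrass form
`Y² = X³ + (B bᵖ - A aᵖ) X² - (A aᵖ) (B bᵖ) X`. -/
noncomputable def freyCurve {K : Type*} [Field K] [NumberField K]
    (A B a b : 𝓞 K) (p : ℕ) : WeierstrassCurve K where
  a₁ := 0
  a₂ := algebraMap (𝓞 K) K (B * b ^ p - A * a ^ p)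
  a₃ := 0
  a₄ := algebraMap (𝓞 K) K (-(A * a ^ p * (B * b ^ p)))
  a₆ := 0

section helpers
variable {K : Type*} [Field K] [NumberField K] (P : IsDedekindDomain.HeightOneSpectrum (𝓞 K))

lemma val_eq_ofAdd {x : K} (hx : x ≠ 0) :
    P.valuation K x = ((Multiplicative.ofAdd (-(addVal P x)) : Multiplicative ℤ) :
      WithZero (Multiplicative ℤ)) := by
  simp only [addVal, dif_neg hx, neg_neg, ofAdd_toAdd, WithZero.coe_unzero]

lemma addVal_mul {x y : K} (hx : x ≠ 0) (hy : y ≠ 0) :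
    addVal P (x * y) = addVal P x + addVal P y := by
  have h := (P.valuation (K := K)).map_mul x y
  rw [val_eq_ofAdd P hx, val_eq_ofAdd P hy, val_eq_ofAdd P (mul_ne_zero hx hy),
    ← WithZero.coe_mul, ← ofAdd_add, WithZero.coe_inj] at h
  have := Multiplicative.ofAdd.injective h
  omega

lemma addVal_neg (x : K) : addVal P (-x) = addVal P x := by
  rcases eq_or_ne x 0 with rfl | hx
  · simp
  · have h := (P.valuation (K := K)).map_neg x
    rw [val_eq_ofAdd P hx, val_eq_ofAdd P (neg_ne_zero.mpr hx), WithZero.coe_inj] at h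
    have := Multiplicative.ofAdd.injective h
    omega

lemma addVal_pow {x : K} (hx : x ≠ 0) (k : ℕ) :
    addVal P (x ^ k) = k * addVal P x := by
  induction k with
  | zero =>
      have h := addVal_mul P (one_ne_zero (α := K)) (one_ne_zero (α := K))
      rw [mul_one] at h
      simpa using h.symm
  | succ n ih =>
      rw [pow_succ, addVal_mul P (pow_ne_zero n hx) hx, ih]
      push_cast; ring

lemma addVal_div {x y : K} (hx : x ≠ 0) (hy : y ≠ 0) :
    addVal P (x / y) = addVal P x - addVal P y := by
  have h : x / y * y = x := div_mul_cancel₀ x hy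
  have := addVal_mul P (div_ne_zero hx hy) hy
  rw [h] at this
  omega

lemma addVal_nonneg {r : 𝓞 K} (hr : r ≠ 0) :
    0 ≤ addVal P (algebraMap (𝓞 K) K r) := by
  have h := P.valuation_le_one (K := K) r
  have hr' : algebraMap (𝓞 K) K r ≠ 0 :=
    (map_ne_zero_iff _ (IsFractionRing.injective (𝓞 K) K)).mpr hr
  rw [val_eq_ofAdd P hr'] at h
  rw [show (1 : WithZero (Multiplicative ℤ)) =
    ((Multiplicative.ofAdd (0 : ℤ) : Multiplicative ℤ) : WithZero (Multiplicative ℤ)) by rfl,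
    WithZero.coe_le_coe, Multiplicative.ofAdd_le] at h
  omega

lemma one_le_addVal_iff {r : 𝓞 K} (hr : r ≠ 0) :
    1 ≤ addVal P (algebraMap (𝓞 K) K r) ↔ r ∈ P.asIdeal := by
  have h := P.valuation_lt_one_iff_dvd (K := K) r
  rw [Ideal.dvd_span_singleton] at h
  have hr' : algebraMap (𝓞 K) K r ≠ 0 :=
    (map_ne_zero_iff _ (IsFractionRing.injective (𝓞 K) K)).mpr hr
  rw [val_eq_ofAdd P hr',
    show (1 : WithZero (Multiplicative ℤ)) =
    ((Multiplicative.ofAdd (0 : ℤ) : Multiplicative ℤ) : WithZero (Multiplicative ℤ)) by rfl,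
    WithZero.coe_lt_coe, Multiplicative.ofAdd_lt] at h
  rw [← h]
  omega

lemma addVal_of_not_mem {r : 𝓞 K} (hr : r ≠ 0) (h : r ∉ P.asIdeal) :
    addVal P (algebraMap (𝓞 K) K r) = 0 := by
  have h1 := addVal_nonneg P hr
  have h2 := (one_le_addVal_iff P hr).not.mpr h
  omega

lemma addVal_add_of_lt {x y : K} (hx : x ≠ 0) (hy : y ≠ 0)
    (h : addVal P x < addVal P y) : x + y ≠ 0 ∧ addVal P (x + y) = addVal P x := by
  have hne : P.valuation (K := K) x ≠ P.valuation K y := by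
    rw [val_eq_ofAdd P hx, val_eq_ofAdd P hy]
    intro hcontra
    rw [WithZero.coe_inj] at hcontra
    have := Multiplicative.ofAdd.injective hcontra
    omega
  have hmax := Valuation.map_add_of_distinct_val _ hne
  have hlt : P.valuation (K := K) y < P.valuation K x := by
    rw [val_eq_ofAdd P hx, val_eq_ofAdd P hy, WithZero.coe_lt_coe, Multiplicative.ofAdd_lt]
    omega
  rw [max_eq_left hlt.le] at hmax
  have hxy : x + y ≠ 0 := by
    intro h0
    rw [h0, map_zero, val_eq_ofAdd P hx] at hmax
    exact WithZero.coe_ne_zero hmax.symm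
  refine ⟨hxy, ?_⟩
  rw [val_eq_ofAdd P hxy, val_eq_ofAdd P hx, WithZero.coe_inj] at hmax
  have := Multiplicative.ofAdd.injective hmax
  omega

end helpers

/-- If `𝔓 | 2`, `𝔓 ∤ A B C`, `v_𝔓(b) ≥ 1` and `v_𝔓(a) = v_𝔓(c) = 0`, then the
j-invariant of the Frey curve satisfies `v_𝔓(j) = 8 v_𝔓(2) - 2 p v_𝔓(b)`; in particular
if `p > 4 v_𝔓(2)` then `v_𝔓(j) < 0`. -/
theorem frey_valuation_j {K : Type*} [Field K] [NumberField K]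
    (A B C a b c : 𝓞 K) (hA : A ≠ 0) (hB : B ≠ 0) (hC : C ≠ 0)
    (habc : a * b * c ≠ 0) (p : ℕ) (hp : p.Prime)
    (hFermat : A * a ^ p + B * b ^ p + C * c ^ p = 0)
    (P : IsDedekindDomain.HeightOneSpectrum (𝓞 K))
    (h2 : (2 : 𝓞 K) ∈ P.asIdeal)
    (hABC : A * B * C ∉ P.asIdeal)
    (hb : 1 ≤ addVal P (algebraMap (𝓞 K) K b))
    (ha : addVal P (algebraMap (𝓞 K) K a) = 0)
    (hc : addVal P (algebraMap (𝓞 K) K c) = 0)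
    (j : K) (hj : j = (freyCurve A B a b p).c₄ ^ 3 / (freyCurve A B a b p).Δ) :
    addVal P j = 8 * addVal P (2 : K) - 2 * p * addVal P (algebraMap (𝓞 K) K b) ∧
      ((4 * addVal P (2 : K) < p) → addVal P j < 0) := by
  have hinj := IsFractionRing.injective (𝓞 K) K
  set f := algebraMap (𝓞 K) K with hf
  have ha0 : a ≠ 0 := fun h => habc (by simp [h])
  have hb0 : b ≠ 0 := fun h => habc (by simp [h])
  have hc0 : c ≠ 0 := fun h => habc (by simp [h])
  have hfne : ∀ r : 𝓞 K, r ≠ 0 → f r ≠ 0 := fun r hr => (map_ne_zero_iff f hinj).mpr hr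
  set α : K := f A * (f a) ^ p with hα
  set β : K := f B * (f b) ^ p with hβ
  set γ : K := f C * (f c) ^ p with hγ
  have hα0 : α ≠ 0 := mul_ne_zero (hfne A hA) (pow_ne_zero _ (hfne a ha0))
  have hβ0 : β ≠ 0 := mul_ne_zero (hfne B hB) (pow_ne_zero _ (hfne b hb0))
  have hγ0 : γ ≠ 0 := mul_ne_zero (hfne C hC) (pow_ne_zero _ (hfne c hc0))
  have hsum : α + β + γ = 0 := by
    have := congrArg f hFermat
    simpa [map_add, map_mul, map_pow] using this
  -- not-mem facts
  have hAnm : A ∉ P.asIdeal := fun h => hABC (Ideal.mul_mem_right _ _ (Ideal.mul_mem_right _ _ h))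
  have hBnm : B ∉ P.asIdeal := fun h => hABC (Ideal.mul_mem_right _ _ (Ideal.mul_mem_left _ _ h))
  have hCnm : C ∉ P.asIdeal := fun h => hABC (Ideal.mul_mem_left _ _ h)
  set n : ℤ := addVal P (f b) with hn
  set m : ℤ := addVal P (2 : K) with hm
  have hvα : addVal P α = 0 := by
    rw [hα, addVal_mul P (hfne A hA) (pow_ne_zero _ (hfne a ha0)),
      addVal_pow P (hfne a ha0), addVal_of_not_mem P hA hAnm, ha]
    ring
  have hvβ : addVal P β = p * n := by
    rw [hβ, addVal_mul P (hfne B hB) (pow_ne_zero _ (hfne b hb0)),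
      addVal_pow P (hfne b hb0), addVal_of_not_mem P hB hBnm]
    ring
  have hvγ : addVal P γ = 0 := by
    rw [hγ, addVal_mul P (hfne C hC) (pow_ne_zero _ (hfne c hc0)),
      addVal_pow P (hfne c hc0), addVal_of_not_mem P hC hCnm, hc]
    ring
  have hm1 : 1 ≤ m := by
    have h2' : (2 : 𝓞 K) ≠ 0 := two_ne_zero
    have := (one_le_addVal_iff P h2').mpr h2
    rwa [show f (2 : 𝓞 K) = (2 : K) by rw [show (2 : 𝓞 K) = 1 + 1 by norm_num, map_add, map_one]; norm_num] at this
  have hp2 : 2 ≤ p := hp.two_le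
  -- the key quantity X
  set X : K := α ^ 2 + α * β + β ^ 2 with hX
  have hXeq : X = α ^ 2 + -(β * γ) := by rw [hX]; linear_combination β * hsum
  have hlt : addVal P (α ^ 2) < addVal P (-(β * γ)) := by
    rw [addVal_pow P hα0, hvα, addVal_neg, addVal_mul P hβ0 hγ0, hvβ, hvγ]
    have : (1 : ℤ) ≤ n := hb
    nlinarith [hp2, this]
  obtain ⟨hXne, hXval⟩ := addVal_add_of_lt P (pow_ne_zero 2 hα0) (neg_ne_zero.mpr (mul_ne_zero hβ0 hγ0)) hlt
  rw [← hXeq] at hXne hXval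
  have hvX : addVal P X = 0 := by rw [hXval, addVal_pow P hα0, hvα]; ring
  -- c₄ and Δ
  have hc4 : (freyCurve A B a b p).c₄ = 16 * X := by
    simp only [freyCurve, WeierstrassCurve.c₄, WeierstrassCurve.b₂, WeierstrassCurve.b₄,
      map_neg, map_sub, map_mul, map_pow, hX, hα, hβ, ← hf]
    ring
  have hΔ : (freyCurve A B a b p).Δ = 16 * (α ^ 2 * β ^ 2 * γ ^ 2) := by
    simp only [freyCurve, WeierstrassCurve.Δ, WeierstrassCurve.b₂, WeierstrassCurve.b₄,
      WeierstrassCurve.b₆, WeierstrassCurve.b₈,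
      map_neg, map_sub, map_mul, map_pow, map_zero, ← hf]
    linear_combination (16 * α ^ 2 * β ^ 2 * (α + β - γ)) * hsum
  have h16 : (16 : K) ≠ 0 := by norm_num
  have hv16 : addVal P (16 : K) = 4 * m := by
    rw [show (16 : K) = 2 ^ 4 by norm_num, addVal_pow P (two_ne_zero), hm]
    push_cast; ring
  have hnum : addVal P ((16 * X) ^ 3) = 12 * m := by
    rw [addVal_pow P (mul_ne_zero h16 hXne), addVal_mul P h16 hXne, hv16, hvX]
    push_cast; ring
  have hden0 : (16 : K) * (α ^ 2 * β ^ 2 * γ ^ 2) ≠ 0 :=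
    mul_ne_zero h16 (mul_ne_zero (mul_ne_zero (pow_ne_zero _ hα0) (pow_ne_zero _ hβ0)) (pow_ne_zero _ hγ0))
  have hden : addVal P (16 * (α ^ 2 * β ^ 2 * γ ^ 2)) = 4 * m + 2 * p * n := by
    rw [addVal_mul P h16 (mul_ne_zero (mul_ne_zero (pow_ne_zero _ hα0) (pow_ne_zero _ hβ0)) (pow_ne_zero _ hγ0)),
      addVal_mul P (mul_ne_zero (pow_ne_zero _ hα0) (pow_ne_zero _ hβ0)) (pow_ne_zero _ hγ0),
      addVal_mul P (pow_ne_zero _ hα0) (pow_ne_zero _ hβ0),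
      addVal_pow P hα0, addVal_pow P hβ0, addVal_pow P hγ0, hvα, hvβ, hvγ, hv16]
    push_cast; ring
  have hjval : addVal P j = 8 * m - 2 * p * n := by
    rw [hj, hc4, hΔ, addVal_div P (pow_ne_zero 3 (mul_ne_zero h16 hXne)) hden0, hnum, hden]
    ring
  refine ⟨hjval, fun hlt' => ?_⟩
  rw [hjval]
  have hn1 : (1 : ℤ) ≤ n := hb
  have hppos : (0 : ℤ) < p := by exact_mod_cast hp.pos
  nlinarith [hlt', hn1, hppos]
end

section
/- Let 𝔮 be a prime ideal of O_K with 𝔮 ∤ 2·A·B·C, and suppose that a, b, c do not all lie in 𝔮. Then for the Frey curve one has v_𝔮(Δ) = 0 or v_𝔮(c₄) = 0, where Δ and c₄ are the invariants of the model Y² = X(X − A·aᵖ)(X + B·bᵖ); i.e. this model is minimal and semistable at 𝔮. -/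
open NumberField

lemma addVal_algebraMap_eq_zero {K : Type*} [Field K] [NumberField K]
    (Q : IsDedekindDomain.HeightOneSpectrum (𝓞 K)) (x : 𝓞 K) (hx : x ∉ Q.asIdeal) :
    addVal Q (algebraMap (𝓞 K) K x) = 0 := by
  have hx0 : x ≠ 0 := fun h => hx (h ▸ Q.asIdeal.zero_mem)
  have hval : Q.valuation K (algebraMap (𝓞 K) K x) = 1 := by
    rw [Q.valuation_of_algebraMap]
    have h1 := Q.intValuation_le_one x
    have h2 : ¬ Q.intValuation x < 1 := by
      rw [IsDedekindDomain.HeightOneSpectrum.intValuation_lt_one_iff_dvd]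
      intro hdvd
      exact hx ((Ideal.dvd_iff_le.mp hdvd) (Ideal.mem_span_singleton_self x))
    exact le_antisymm h1 (not_lt.mp h2)
  have hmap : algebraMap (𝓞 K) K x ≠ 0 := by
    intro h
    exact hx0 ((map_eq_zero_iff _ (NumberField.RingOfIntegers.coe_injective (K := K))).mp h)
  unfold addVal
  rw [dif_neg hmap]
  have hu : WithZero.unzero ((Q.valuation (K := K)).ne_zero_iff.mpr hmap) = 1 :=
    WithZero.coe_inj.mp
      ((WithZero.coe_unzero ((Q.valuation (K := K)).ne_zero_iff.mpr hmap)).trans hval)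
  rw [hu]
  simp

/-- If `𝔮 ∤ 2 A B C` and `a, b, c` do not all lie in `𝔮`, then the Frey curve model
satisfies `v_𝔮(Δ) = 0` or `v_𝔮(c₄) = 0`; i.e. the model is minimal and semistable at `𝔮`. -/
theorem frey_semistable {K : Type*} [Field K] [NumberField K]
    (A B C a b c : 𝓞 K) (hA : A ≠ 0) (hB : B ≠ 0) (hC : C ≠ 0)
    (habc : a * b * c ≠ 0) (p : ℕ) (hp : p.Prime)
    (hFermat : A * a ^ p + B * b ^ p + C * c ^ p = 0)
    (Q : IsDedekindDomain.HeightOneSpectrum (𝓞 K))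
    (hQ : 2 * (A * B * C) ∉ Q.asIdeal)
    (hnotall : ¬ (a ∈ Q.asIdeal ∧ b ∈ Q.asIdeal ∧ c ∈ Q.asIdeal)) :
    addVal Q (freyCurve A B a b p).Δ = 0 ∨ addVal Q (freyCurve A B a b p).c₄ = 0 := by
  have hpr : Q.asIdeal.IsPrime := Q.isPrime
  have nmul : ∀ x y : 𝓞 K, x ∉ Q.asIdeal → y ∉ Q.asIdeal → x * y ∉ Q.asIdeal :=
    fun x y hx hy h => (hpr.mem_or_mem h).elim hx hy
  have npow : ∀ (x : 𝓞 K) (n : ℕ), x ∉ Q.asIdeal → x ^ n ∉ Q.asIdeal :=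
    fun x n hx h => hx (hpr.mem_of_pow_mem n h)
  have memofpow : ∀ (x : 𝓞 K) (n : ℕ), x ^ n ∈ Q.asIdeal → x ∈ Q.asIdeal :=
    fun x n h => hpr.mem_of_pow_mem n h
  have h2 : (2 : 𝓞 K) ∉ Q.asIdeal := fun h => hQ (Ideal.mul_mem_right _ _ h)
  have hABC : A * B * C ∉ Q.asIdeal := fun h => hQ (Ideal.mul_mem_left _ _ h)
  have hAQ : A ∉ Q.asIdeal := fun h => hABC (Ideal.mul_mem_right _ _ (Ideal.mul_mem_right _ _ h))
  have hBQ : B ∉ Q.asIdeal := fun h => hABC (Ideal.mul_mem_right _ _ (Ideal.mul_mem_left _ _ h))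
  have hCQ : C ∉ Q.asIdeal := fun h => hABC (Ideal.mul_mem_left _ _ h)
  have h16 : (16 : 𝓞 K) ∉ Q.asIdeal := by
    have : (16 : 𝓞 K) = 2 ^ 4 := by norm_num
    rw [this]; exact npow 2 4 h2
  have hΔ : (freyCurve A B a b p).Δ
      = algebraMap (𝓞 K) K (16 * (A * a ^ p) ^ 2 * (B * b ^ p) ^ 2 * (C * c ^ p) ^ 2) := by
    have huv : (C * c ^ p) ^ 2 = (A * a ^ p + B * b ^ p) ^ 2 := by
      have h : C * c ^ p = -(A * a ^ p + B * b ^ p) := by linear_combination hFermat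
      rw [h]; ring
    rw [huv]
    simp only [freyCurve, WeierstrassCurve.Δ, WeierstrassCurve.b₂, WeierstrassCurve.b₄,
      WeierstrassCurve.b₆, WeierstrassCurve.b₈, map_mul, map_add, map_sub, map_pow, map_neg,
      map_ofNat]
    ring
  have hc₄ : (freyCurve A B a b p).c₄
      = algebraMap (𝓞 K) K
        (16 * ((A * a ^ p) ^ 2 + (A * a ^ p) * (B * b ^ p) + (B * b ^ p) ^ 2)) := by
    simp only [freyCurve, WeierstrassCurve.c₄, WeierstrassCurve.b₂, WeierstrassCurve.b₄,
      map_mul, map_add, map_sub, map_pow, map_neg, map_ofNat]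
    ring
  by_cases ha : a ∈ Q.asIdeal
  · have hb : b ∉ Q.asIdeal := by
      intro hb
      apply hnotall
      refine ⟨ha, hb, ?_⟩
      have hwQ : C * c ^ p ∈ Q.asIdeal := by
        have h : C * c ^ p = -(A * a ^ p + B * b ^ p) := by linear_combination hFermat
        rw [h]
        exact neg_mem (Ideal.add_mem _
          (Ideal.mul_mem_left _ _ (Ideal.pow_mem_of_mem _ ha p hp.pos))
          (Ideal.mul_mem_left _ _ (Ideal.pow_mem_of_mem _ hb p hp.pos)))
      rcases hpr.mem_or_mem hwQ with h | h
      · exact absurd h hCQ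
      · exact memofpow c p h
    right
    rw [hc₄]
    apply addVal_algebraMap_eq_zero
    apply nmul _ _ h16
    intro hs
    have huQ : A * a ^ p ∈ Q.asIdeal :=
      Ideal.mul_mem_left _ _ (Ideal.pow_mem_of_mem _ ha p hp.pos)
    have hv2 : (B * b ^ p) ^ 2 ∈ Q.asIdeal := by
      have h : (B * b ^ p) ^ 2 =
          ((A * a ^ p) ^ 2 + (A * a ^ p) * (B * b ^ p) + (B * b ^ p) ^ 2)
            - (A * a ^ p) * (A * a ^ p + B * b ^ p) := by ring
      rw [h]
      exact Ideal.sub_mem _ hs (Ideal.mul_mem_right _ _ huQ)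
    exact (nmul B (b ^ p) hBQ (npow b p hb)) (memofpow _ 2 hv2)
  · by_cases hb : b ∈ Q.asIdeal
    · right
      rw [hc₄]
      apply addVal_algebraMap_eq_zero
      apply nmul _ _ h16
      intro hs
      have hvQ : B * b ^ p ∈ Q.asIdeal :=
        Ideal.mul_mem_left _ _ (Ideal.pow_mem_of_mem _ hb p hp.pos)
      have hu2 : (A * a ^ p) ^ 2 ∈ Q.asIdeal := by
        have h : (A * a ^ p) ^ 2 =
            ((A * a ^ p) ^ 2 + (A * a ^ p) * (B * b ^ p) + (B * b ^ p) ^ 2)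
              - (B * b ^ p) * (A * a ^ p + B * b ^ p) := by ring
        rw [h]
        exact Ideal.sub_mem _ hs (Ideal.mul_mem_right _ _ hvQ)
      exact (nmul A (a ^ p) hAQ (npow a p ha)) (memofpow _ 2 hu2)
    · by_cases hc : c ∈ Q.asIdeal
      · right
        rw [hc₄]
        apply addVal_algebraMap_eq_zero
        apply nmul _ _ h16
        intro hs
        have hwQ : C * c ^ p ∈ Q.asIdeal :=
          Ideal.mul_mem_left _ _ (Ideal.pow_mem_of_mem _ hc p hp.pos)
        have huvQ : (A * a ^ p) * (B * b ^ p) ∈ Q.asIdeal := by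
          have h : (A * a ^ p) * (B * b ^ p) =
              (C * c ^ p) * (C * c ^ p)
                - ((A * a ^ p) ^ 2 + (A * a ^ p) * (B * b ^ p) + (B * b ^ p) ^ 2)
                + (A * a ^ p + B * b ^ p + C * c ^ p)
                  * (A * a ^ p + B * b ^ p - C * c ^ p) := by ring
          rw [h, hFermat]
          simpa using Ideal.sub_mem _ (Ideal.mul_mem_right _ _ hwQ) hs
        rcases hpr.mem_or_mem huvQ with h | h
        · exact (nmul A (a ^ p) hAQ (npow a p ha)) h
        · exact (nmul B (b ^ p) hBQ (npow b p hb)) h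
      · left
        rw [hΔ]
        apply addVal_algebraMap_eq_zero
        exact nmul _ _ (nmul _ _ (nmul _ _ h16
          (npow _ 2 (nmul A (a ^ p) hAQ (npow a p ha))))
          (npow _ 2 (nmul B (b ^ p) hBQ (npow b p hb))))
          (npow _ 2 (nmul C (c ^ p) hCQ (npow c p hc)))
end

section
/- The set of squarefree integers d ≥ 2 for which there exist an odd integer r ≥ 3 and an integer v with d·v² = 2^{r+2} − 1 has absolute density zero: if C'(κ₂) denotes this set, then lim_{X→∞} #C'(κ₂)(X)/X = 0. -/
open Filter ArithmeticFunction.vonMangoldt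



lemma aux_mod_iff (n : ℕ) : (n : ZMod 8) = 3 ↔ n % 8 = 3 := by
  constructor
  · intro h
    have := congrArg ZMod.val h
    rwa [ZMod.val_natCast] at this
  · intro h
    rw [← ZMod.natCast_mod, h]
    rfl

lemma aux_not_summable :
    ¬ Summable (fun n : ℕ ↦ if n.Prime ∧ n % 8 = 3 then (1 / n : ℝ) else 0) := by
  set f : ℕ → ℝ := fun n ↦ if n.Prime ∧ n % 8 = 3 then (1 / n : ℝ) else 0 with hfdef
  intro hs
  have hf0 : ∀ n, 0 ≤ f n := by
    intro n; simp only [hfdef]; split <;> positivity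
  obtain ⟨T, hT⟩ : ∃ T : ℕ, ∑' k, f (k + T) < 1 / 8 :=
    ((tendsto_sum_nat_add f).eventually (gt_mem_nhds (by norm_num : (0:ℝ) < 1/8))).exists
  have ha : IsUnit (3 : ZMod 8) := by decide
  obtain ⟨C, hC⟩ := LSeries_residueClass_lower_bound ha
  set A : ℕ → ℝ := fun n ↦ (if n.Prime then 0 else residueClass (3 : ZMod 8) n) / n
      + (if n < T then ArithmeticFunction.vonMangoldt n else 0) with hAdef
  set B : ℕ → ℝ := fun n ↦ if T ≤ n then f n else 0 with hBdef
  have hA0 : ∀ n, 0 ≤ A n := by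
    intro n
    have h1 : 0 ≤ (if n.Prime then 0 else residueClass (3 : ZMod 8) n) / n := by
      apply div_nonneg _ (Nat.cast_nonneg n)
      split
      · exact le_rfl
      · exact residueClass_nonneg _ n
    have h2 : 0 ≤ (if n < T then ArithmeticFunction.vonMangoldt n else 0) := by
      split
      · exact ArithmeticFunction.vonMangoldt_nonneg
      · exact le_rfl
    exact add_nonneg h1 h2
  have hB0 : ∀ n, 0 ≤ B n := by
    intro n; simp only [hBdef]; split
    · exact hf0 n
    · exact le_rfl
  have hAsum : Summable A := by
    refine (summable_residueClass_non_primes_div (3 : ZMod 8)).add ?_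
    apply summable_of_finite_support
    apply Set.Finite.subset (Finset.range T).finite_toSet
    intro n hn
    simp only [Function.mem_support] at hn
    by_contra h
    simp only [Finset.coe_range, Set.mem_Iio, not_lt] at h
    exact hn (if_neg (by omega))
  have hBsum : Summable B := by
    refine hs.of_nonneg_of_le hB0 ?_
    intro n; simp only [hBdef]; split
    · exact le_rfl
    · exact hf0 n
  have hBsmall : ∑' n, B n < 1 / 8 := by
    have h1 := Summable.sum_add_tsum_nat_add T hBsum
    have h2 : ∑ i ∈ Finset.range T, B i = 0 := by
      apply Finset.sum_eq_zero
      intro i hi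
      simp only [Finset.mem_range] at hi
      exact if_neg (by omega)
    have h3 : ∀ k : ℕ, B (k + T) = f (k + T) := by
      intro k; exact if_pos (by omega)
    calc ∑' n, B n = ∑' k, B (k + T) := by rw [← h1, h2, zero_add]
    _ = ∑' k, f (k + T) := tsum_congr h3
    _ < 1 / 8 := hT
  have hB0' : 0 ≤ ∑' n, B n := tsum_nonneg hB0
  have key : ∀ x : ℝ, x ∈ Set.Ioc 1 2 →
      (1 / 4) / (x - 1) - C ≤ (∑' n, A n) + (x - 1)⁻¹ * ∑' n, B n := by
    intro x hx
    have hx1 : (1:ℝ) < x := hx.1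
    have hs1 : 0 < x - 1 := by linarith
    have hsummand : Summable fun n : ℕ ↦ residueClass (3 : ZMod 8) n / (n : ℝ) ^ x :=
      LSeries.summable_real_of_abscissaOfAbsConv_lt <|
        (abscissaOfAbsConv_residueClass_le_one (3 : ZMod 8)).trans_lt (by exact_mod_cast hx1)
    have claim : ∀ n : ℕ, residueClass (3 : ZMod 8) n / (n : ℝ) ^ x
        ≤ A n + (x - 1)⁻¹ * B n := by
      intro n
      have hRHS0 : 0 ≤ A n + (x - 1)⁻¹ * B n :=
        add_nonneg (hA0 n) (mul_nonneg (by positivity) (hB0 n))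
      rcases Nat.eq_zero_or_pos n with rfl | hn
      · simpa using hRHS0
      have hnR : (0:ℝ) < n := by exact_mod_cast hn
      have hn1 : (1:ℝ) ≤ n := by exact_mod_cast hn
      by_cases hp : n.Prime
      · by_cases hcl : (n : ZMod 8) = 3
        · have hres : residueClass (3 : ZMod 8) n = Real.log n := by
            rw [show residueClass (3 : ZMod 8) n = ArithmeticFunction.vonMangoldt n from
              Set.indicator_of_mem (show n ∈ {m : ℕ | (m : ZMod 8) = 3} from hcl) _,
              ArithmeticFunction.vonMangoldt_apply_prime hp]
          by_cases hnT : n < T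
          · have h1 : residueClass (3 : ZMod 8) n / (n : ℝ) ^ x ≤ ArithmeticFunction.vonMangoldt n := by
              have hpow : (1:ℝ) ≤ (n : ℝ) ^ x := Real.one_le_rpow hn1 (by linarith)
              calc residueClass (3 : ZMod 8) n / (n : ℝ) ^ x
                  ≤ residueClass (3 : ZMod 8) n / 1 :=
                    div_le_div_of_nonneg_left (residueClass_nonneg _ n) one_pos hpow
              _ = residueClass (3 : ZMod 8) n := div_one _
              _ ≤ ArithmeticFunction.vonMangoldt n := residueClass_le _ n
            have hAn : A n = ArithmeticFunction.vonMangoldt n := by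
              rw [hAdef]; simp [hp, hnT]
            have h2 : 0 ≤ (x - 1)⁻¹ * B n := mul_nonneg (by positivity) (hB0 n)
            rw [hAn]
            linarith
          · have hBn : B n = 1 / n := by
              rw [hBdef]
              simp only
              rw [if_pos (by omega), hfdef]
              simp only
              rw [if_pos ⟨hp, (aux_mod_iff n).mp hcl⟩]
            have hlog : Real.log n ≤ (n : ℝ) ^ (x - 1) / (x - 1) := by
              rw [le_div_iff₀ hs1, mul_comm]
              calc (x - 1) * Real.log n = Real.log ((n : ℝ) ^ (x - 1)) :=
                    (Real.log_rpow hnR _).symm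
              _ ≤ (n : ℝ) ^ (x - 1) - 1 := Real.log_le_sub_one_of_pos (by positivity)
              _ ≤ (n : ℝ) ^ (x - 1) := by linarith
            have hxsplit : (n : ℝ) ^ x = n * (n : ℝ) ^ (x - 1) := by
              have h := Real.rpow_add hnR 1 (x - 1)
              rw [Real.rpow_one] at h
              have hx' : 1 + (x - 1) = x := by ring
              conv_lhs => rw [← hx']
              exact h
            have hpow0 : (0:ℝ) < (n : ℝ) ^ (x - 1) := by positivity
            have h1 : residueClass (3 : ZMod 8) n / (n : ℝ) ^ x ≤ (x - 1)⁻¹ * (1 / n) := by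
              rw [hres, hxsplit]
              rw [div_le_iff₀ (by positivity)]
              calc Real.log n ≤ (n : ℝ) ^ (x - 1) / (x - 1) := hlog
              _ = (x - 1)⁻¹ * (1 / n) * (n * (n : ℝ) ^ (x - 1)) := by
                    field_simp
            calc residueClass (3 : ZMod 8) n / (n : ℝ) ^ x ≤ (x - 1)⁻¹ * (1 / n) := h1
            _ = (x - 1)⁻¹ * B n := by rw [hBn]
            _ ≤ A n + (x - 1)⁻¹ * B n := le_add_of_nonneg_left (hA0 n)
        · have hz : residueClass (3 : ZMod 8) n = 0 :=
            Set.indicator_apply_eq_zero.mpr (fun h => absurd h hcl)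
          rw [hz, zero_div]
          exact hRHS0
      · have hpow : (n:ℝ) ≤ (n : ℝ) ^ x := by
          calc (n:ℝ) = (n:ℝ) ^ (1:ℝ) := (Real.rpow_one _).symm
          _ ≤ (n:ℝ) ^ x := Real.rpow_le_rpow_of_exponent_le hn1 (by linarith)
        have h1 : residueClass (3 : ZMod 8) n / (n : ℝ) ^ x
            ≤ (if n.Prime then 0 else residueClass (3 : ZMod 8) n) / n := by
          rw [if_neg hp]
          exact div_le_div_of_nonneg_left (residueClass_nonneg _ n) hnR hpow
        have h2 : 0 ≤ (if n < T then ArithmeticFunction.vonMangoldt n else 0) := by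
          split
          · exact ArithmeticFunction.vonMangoldt_nonneg
          · exact le_rfl
        have h3 : 0 ≤ (x - 1)⁻¹ * B n := mul_nonneg (by positivity) (hB0 n)
        calc residueClass (3 : ZMod 8) n / (n : ℝ) ^ x
            ≤ (if n.Prime then 0 else residueClass (3 : ZMod 8) n) / n := h1
        _ ≤ A n + (x - 1)⁻¹ * B n := by rw [hAdef]; simp only; linarith
    have htot : ((Nat.totient 8 : ℝ))⁻¹ = 1 / 4 := by
      norm_num [show Nat.totient 8 = 4 from by decide]
    have h1 := hC hx
    rw [htot] at h1
    have hBsum' : Summable fun n ↦ (x - 1)⁻¹ * B n := hBsum.mul_left _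
    calc (1 / 4) / (x - 1) - C ≤ ∑' n, residueClass (3 : ZMod 8) n / (n : ℝ) ^ x := h1
    _ ≤ ∑' n, (A n + (x - 1)⁻¹ * B n) := Summable.tsum_le_tsum claim hsummand (hAsum.add hBsum')
    _ = (∑' n, A n) + ∑' n, (x - 1)⁻¹ * B n := Summable.tsum_add hAsum hBsum'
    _ = (∑' n, A n) + (x - 1)⁻¹ * ∑' n, B n := by rw [tsum_mul_left]
  set K := ∑' n, A n with hK
  set E := ∑' n, B n with hE
  have key2 : ∀ x : ℝ, x ∈ Set.Ioc 1 2 → (1 / 8) * (x - 1)⁻¹ ≤ C + K := by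
    intro x hx
    have h1 := key x hx
    have hs1 : 0 < x - 1 := by linarith [hx.1]
    have h2 : (x - 1)⁻¹ * E ≤ (x - 1)⁻¹ * (1 / 8) :=
      mul_le_mul_of_nonneg_left hBsmall.le (by positivity)
    have h3 : (1 / 4) / (x - 1) = (1/4) * (x-1)⁻¹ := div_eq_mul_inv _ _
    nlinarith [h1, h2]
  have hD : (1:ℝ) / 8 ≤ C + K := by
    have := key2 2 (by norm_num)
    norm_num at this
    linarith
  have hDpos : 0 < C + K := by linarith
  set x : ℝ := 1 + 1 / (16 * (C + K)) with hxdef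
  have hpos' : 0 < 1 / (16 * (C + K)) := by positivity
  have hx1 : 1 < x := by rw [hxdef]; linarith
  have hxm : x - 1 = 1 / (16 * (C + K)) := by rw [hxdef]; ring
  have hx2 : x ≤ 2 := by
    rw [hxdef]
    have : 1 / (16 * (C + K)) ≤ 1 := by
      rw [div_le_one (by positivity)]
      nlinarith
    linarith
  have hfin := key2 x ⟨hx1, hx2⟩
  rw [hxm] at hfin
  have hinv : ((1:ℝ) / (16 * (C + K)))⁻¹ = 16 * (C + K) := by
    rw [one_div, inv_inv]
  rw [hinv] at hfin
  nlinarith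


lemma aux_not_dvd {p d : ℕ} (hp : p.Prime) (h8 : p % 8 = 3) {k : ℕ} (hk : Odd k)
    {v : ℤ} (h : (d : ℤ) * v ^ 2 = 2 ^ k - 1) : ¬ p ∣ d := by
  intro hpd
  haveI : Fact p.Prime := ⟨hp⟩
  have hd0 : (d : ZMod p) = 0 := (ZMod.natCast_eq_zero_iff d p).mpr hpd
  have h2 : (2 : ZMod p) ^ k = 1 := by
    have hcast := congrArg (fun z : ℤ => (z : ZMod p)) h
    push_cast at hcast
    rw [hd0, zero_mul] at hcast
    have := hcast.symm
    rwa [sub_eq_zero] at this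
  set m := orderOf (2 : ZMod p) with hm
  have hmk : m ∣ k := orderOf_dvd_of_pow_eq_one h2
  have hmodd : Odd m := by
    rcases Nat.even_or_odd m with he | ho
    · exfalso
      have h2k : (2:ℕ) ∣ k := dvd_trans he.two_dvd hmk
      rw [Nat.odd_iff] at hk
      omega
    · exact ho
  have hsq : IsSquare (2 : ZMod p) := by
    obtain ⟨t, ht⟩ := hmodd
    refine ⟨2 ^ (t + 1), ?_⟩
    have h1 : (2 : ZMod p) ^ m = 1 := pow_orderOf_eq_one _
    calc (2 : ZMod p) = (2 : ZMod p) ^ m * 2 := by rw [h1, one_mul]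
    _ = (2 : ZMod p) ^ (m + 1) := (pow_succ _ _).symm
    _ = (2 : ZMod p) ^ (t + 1) * (2 : ZMod p) ^ (t + 1) := by
          rw [← pow_add]; congr 1; omega
  rw [ZMod.exists_sq_eq_two_iff (by omega : p ≠ 2)] at hsq
  omega

lemma aux_totient_prod (Q : Finset ℕ) (hQ : ∀ p ∈ Q, p.Prime) :
    (∏ p ∈ Q, p).totient = ∏ p ∈ Q, (p - 1) := by
  induction Q using Finset.induction with
  | empty => simp
  | @insert a s ha ih =>
    have hap : a.Prime := hQ a (Finset.mem_insert_self a s)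
    have hcop : Nat.Coprime a (∏ p ∈ s, p) := by
      rw [hap.coprime_iff_not_dvd]
      intro hdvd
      obtain ⟨q, hqs, haq⟩ := (hap.prime.dvd_finset_prod_iff _).mp hdvd
      have : a = q := (Nat.prime_dvd_prime_iff_eq hap (hQ q (Finset.mem_insert_of_mem hqs))).mp haq
      exact ha (this ▸ hqs)
    rw [Finset.prod_insert ha, Finset.prod_insert ha, Nat.totient_mul hcop,
      Nat.totient_prime hap, ih (fun p hp => hQ p (Finset.mem_insert_of_mem hp))]


open Filter in
/-- The set of squarefree `d ≥ 2` for which there exist an odd integer `r ≥ 3` and an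
integer `v` with `d v² = 2^{r+2} - 1` has absolute density zero. -/
theorem density_zero_odd_exponent
    (C : Set ℕ)
    (hC : C = {d : ℕ | Squarefree d ∧ 2 ≤ d ∧
      ∃ r : ℕ, 3 ≤ r ∧ Odd r ∧ ∃ v : ℤ, (d : ℤ) * v ^ 2 = 2 ^ (r + 2) - 1}) :
    Tendsto (fun X : ℕ => (Nat.card {d : ℕ // d ∈ C ∧ d ≤ X} : ℝ) / (X : ℝ))
      atTop (nhds 0) := by
  rw [Metric.tendsto_atTop]
  intro ε hε
  set f : ℕ → ℝ := fun n ↦ if n.Prime ∧ n % 8 = 3 then (1 / n : ℝ) else 0 with hfdef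
  have hf0 : ∀ n, 0 ≤ f n := by
    intro n; simp only [hfdef]; split <;> positivity
  have hdiv : Tendsto (fun n ↦ ∑ i ∈ Finset.range n, f i) atTop atTop :=
    (not_summable_iff_tendsto_nat_atTop_of_nonneg hf0).mp aux_not_summable
  obtain ⟨n, hn⟩ := (hdiv.eventually (eventually_gt_atTop (Real.log (2 / ε)))).exists
  set Q : Finset ℕ := (Finset.range n).filter (fun p => p.Prime ∧ p % 8 = 3) with hQdef
  have hQprime : ∀ p ∈ Q, p.Prime := by
    intro p hp
    exact ((Finset.mem_filter.mp hp).2).1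
  have hQmod : ∀ p ∈ Q, p % 8 = 3 := by
    intro p hp
    exact ((Finset.mem_filter.mp hp).2).2
  set M : ℕ := ∏ p ∈ Q, p with hMdef
  have hM1 : 1 ≤ M := Finset.one_le_prod' (fun p hp => (hQprime p hp).one_lt.le)
  have hMpos : (0:ℝ) < M := by exact_mod_cast hM1
  -- sum over Q equals partial sum of f
  have hsumQ : ∑ p ∈ Q, (1 / (p:ℝ)) = ∑ i ∈ Finset.range n, f i := by
    rw [hQdef, Finset.sum_filter]
  -- totient bound
  have htot : (M.totient : ℝ) ≤ (M:ℝ) * (ε / 2) := by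
    have h1 : (M.totient : ℝ) = ∏ p ∈ Q, ((p:ℝ) - 1) := by
      rw [hMdef, aux_totient_prod Q hQprime, Nat.cast_prod]
      refine Finset.prod_congr rfl fun p hp => ?_
      have : 1 ≤ p := (hQprime p hp).one_lt.le
      push_cast [Nat.cast_sub this]
      ring
    have h2 : ∏ p ∈ Q, ((p:ℝ) - 1) = (M:ℝ) * ∏ p ∈ Q, (1 - 1/(p:ℝ)) := by
      rw [hMdef, Nat.cast_prod, ← Finset.prod_mul_distrib]
      refine Finset.prod_congr rfl fun p hp => ?_
      have hp0 : (0:ℝ) < p := by exact_mod_cast (hQprime p hp).pos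
      field_simp
    have h3 : ∏ p ∈ Q, (1 - 1/(p:ℝ)) ≤ Real.exp (-(∑ p ∈ Q, (1/(p:ℝ)))) := by
      rw [← Finset.sum_neg_distrib]
      rw [Real.exp_sum]
      refine Finset.prod_le_prod (fun p hp => ?_) (fun p hp => ?_)
      · have hp2 : (2:ℝ) ≤ p := by exact_mod_cast (hQprime p hp).two_le
        have : 1/(p:ℝ) ≤ 1/2 := by
          apply div_le_div_of_nonneg_left one_pos.le two_pos hp2
        linarith
      · have := Real.add_one_le_exp (-(1/(p:ℝ)))
        linarith
    have h4 : Real.exp (-(∑ p ∈ Q, (1/(p:ℝ)))) ≤ ε / 2 := by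
      rw [hsumQ]
      have : Real.exp (-(∑ i ∈ Finset.range n, f i)) ≤ Real.exp (-(Real.log (2/ε))) := by
        apply Real.exp_le_exp.mpr
        linarith
      refine this.trans ?_
      rw [Real.exp_neg, Real.exp_log (by positivity)]
      rw [inv_div]
    calc (M.totient : ℝ) = (M:ℝ) * ∏ p ∈ Q, (1 - 1/(p:ℝ)) := by rw [h1, h2]
    _ ≤ (M:ℝ) * (ε/2) := by
        refine mul_le_mul_of_nonneg_left (h3.trans h4) hMpos.le
  -- counting bound for each X
  have hcard : ∀ X : ℕ, (Nat.card {d : ℕ // d ∈ C ∧ d ≤ X}) ≤ M.totient * ((X+1)/M + 1) := by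
    intro X
    have hsubset : {d : ℕ | d ∈ C ∧ d ≤ X} ⊆
        ↑((Finset.Ico 0 (0 + (X+1))).filter (fun x => M.Coprime x)) := by
      intro d hd
      obtain ⟨hdC, hdX⟩ := hd
      rw [hC] at hdC
      obtain ⟨-, -, r, -, hrodd, v, hv⟩ := hdC
      simp only [Finset.coe_filter, Set.mem_setOf_eq, Finset.mem_Ico, zero_add]
      refine ⟨⟨Nat.zero_le d, by omega⟩, ?_⟩
      refine Nat.Coprime.prod_left fun p hp => ?_
      refine ((hQprime p hp).coprime_iff_not_dvd).mpr ?_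
      have hodd2 : Odd (r + 2) := by
        obtain ⟨t, ht⟩ := hrodd
        exact ⟨t + 1, by omega⟩
      exact aux_not_dvd (hQprime p hp) (hQmod p hp) hodd2 hv
    calc Nat.card {d : ℕ // d ∈ C ∧ d ≤ X}
        = Nat.card {d : ℕ | d ∈ C ∧ d ≤ X} := rfl
    _ ≤ Nat.card ↑((Finset.Ico 0 (0 + (X+1))).filter (fun x => M.Coprime x)) :=
        Nat.card_mono (Finset.finite_toSet _) hsubset
    _ = ((Finset.Ico 0 (0 + (X+1))).filter (fun x => M.Coprime x)).card := by
        exact Nat.card_eq_finsetCard _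
    _ ≤ M.totient * ((X+1)/M + 1) := Nat.Ico_filter_coprime_le 0 (X+1) (by omega)
  -- choose N
  refine ⟨⌈2 * (M:ℝ) / ε⌉₊ + 2, fun X hX => ?_⟩
  have hXR : (2 * (M:ℝ) / ε) + 2 ≤ (X:ℝ) := by
    have h1 : (⌈2 * (M:ℝ) / ε⌉₊ : ℝ) + 2 ≤ (X:ℝ) := by exact_mod_cast hX
    have h2 := Nat.le_ceil (2 * (M:ℝ) / ε)
    linarith
  have hXpos : (0:ℝ) < X := by
    have : (0:ℝ) ≤ 2 * (M:ℝ) / ε := by positivity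
    linarith
  have hcount : (Nat.card {d : ℕ // d ∈ C ∧ d ≤ X} : ℝ) ≤ (ε/2) * ((X:ℝ)+1) + M := by
    have h1 : (Nat.card {d : ℕ // d ∈ C ∧ d ≤ X} : ℝ)
        ≤ (M.totient : ℝ) * ((((X+1)/M : ℕ) : ℝ) + 1) := by
      exact_mod_cast hcard X
    have h2 : (((X+1)/M : ℕ) : ℝ) ≤ ((X:ℝ)+1) / M := by
      have := Nat.cast_div_le (α := ℝ) (m := X+1) (n := M)
      push_cast at this ⊢
      exact this
    have htM : (M.totient : ℝ) ≤ M := by exact_mod_cast Nat.totient_le M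
    have h3 : (M.totient : ℝ) * ((((X+1)/M : ℕ) : ℝ) + 1)
        ≤ (M.totient : ℝ) * (((X:ℝ)+1)/M + 1) := by
      refine mul_le_mul_of_nonneg_left (by linarith) (Nat.cast_nonneg _)
    have h4 : (M.totient : ℝ) * (((X:ℝ)+1)/M + 1)
        = (M.totient : ℝ)/M * ((X:ℝ)+1) + M.totient := by
      field_simp
    have h5 : (M.totient : ℝ)/M ≤ ε/2 := by
      rw [div_le_iff₀ hMpos]
      linarith [htot]
    have h6 : (M.totient : ℝ)/M * ((X:ℝ)+1) ≤ (ε/2) * ((X:ℝ)+1) := by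
      refine mul_le_mul_of_nonneg_right h5 (by linarith)
    linarith
  rw [Real.dist_eq, sub_zero, abs_of_nonneg (by positivity)]
  rw [div_lt_iff₀ hXpos]
  have hfin : (ε/2) * ((X:ℝ)+1) + M < ε * X := by
    have : (ε/2) * (X:ℝ) ≥ (ε/2) * ((2 * (M:ℝ) / ε) + 2) :=
      mul_le_mul_of_nonneg_left hXR (by positivity)
    have hexp : (ε/2) * ((2 * (M:ℝ) / ε) + 2) = M + ε := by
      field_simp
    nlinarith
  linarith
end

section
/- Let m ≥ 1 and s₀ ≥ 2 be integers. For s ≥ 2 let d_{1,s} denote the squarefree part of 2^{s+1} + 1, i.e. the unique squarefree positive integer d such that 2^{s+1} + 1 = d·v² for some positive integer v. Let p₁, …, p_k be distinct primes, each dividing 2^m − 1 and none dividing 2^{s₀+1} + 1, and set N = p₁⋯p_k. Then for every real X > 0, the number of integers n ≤ X of the form n = d_{1,s} for some s ≥ 2 with s ≡ s₀ (mod m) is at most 2^{−k}·X + N. -/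
private lemma pow_eq_pow_of_modEq' {M : Type*} [Monoid M] {a : M} {m i j : ℕ}
    (h : a ^ m = 1) (hij : i ≡ j [MOD m]) : a ^ i = a ^ j := by
  have key : ∀ n : ℕ, a ^ n = a ^ (n % m) := fun n => by
    conv_lhs => rw [← Nat.mod_add_div n m, pow_add, pow_mul, h, one_pow, mul_one]
  rw [key i, key j, show i % m = j % m from hij]

/-- Counting bound for squarefree parts `d_{1,s}` of `2^{s+1} + 1` along an arithmetic
progression `s ≡ s₀ (mod m)`: if `p₁, …, p_k` are distinct primes dividing `2^m - 1`,
none of which divides `2^{s₀+1} + 1`, and `N = p₁ ⋯ p_k`, then the number of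
`n ≤ X` of the form `n = d_{1,s}` for some `s ≥ 2` with `s ≡ s₀ (mod m)` is at most
`2^{-k} X + N`. -/
theorem count_squarefree_parts_bound
    (m s₀ : ℕ) (hm : 1 ≤ m) (hs₀ : 2 ≤ s₀)
    (k : ℕ) (P : Finset ℕ) (hcard : P.card = k)
    (hprime : ∀ p ∈ P, p.Prime)
    (hdvd : ∀ p ∈ P, p ∣ 2 ^ m - 1)
    (hndvd : ∀ p ∈ P, ¬ p ∣ 2 ^ (s₀ + 1) + 1)
    (N : ℕ) (hN : N = ∏ p ∈ P, p)
    (X : ℝ) (hX : 0 < X) :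
    (Nat.card {n : ℕ // (n : ℝ) ≤ X ∧ ∃ s : ℕ, 2 ≤ s ∧ s ≡ s₀ [MOD m] ∧
        Squarefree n ∧ ∃ v : ℕ, 0 < v ∧ 2 ^ (s + 1) + 1 = n * v ^ 2} : ℝ)
      ≤ X / 2 ^ k + (N : ℝ) := by
  classical
  -- basic facts
  have hNpos : 0 < N := hN ▸ Finset.prod_pos (fun p hp => (hprime p hp).pos)
  have hodd : ∀ p ∈ P, p ≠ 2 := by
    intro p hp h2
    have h1 : (1:ℕ) ≤ 2 ^ m := Nat.one_le_two_pow
    have hev : (2:ℕ) ∣ 2 ^ m := dvd_pow_self 2 (by omega)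
    have h2m : (2:ℕ) ∣ 2 ^ m - 1 := h2 ▸ hdvd p hp
    omega
  -- the allowed residue set mod p
  set c : ℕ := 2 ^ (s₀ + 1) + 1 with hc
  let Sp : ∀ p : ℕ, Finset (ZMod p) := fun p =>
    Finset.image (fun u : ℕ => (c : ZMod p) * (u : ZMod p) ^ 2) ((Finset.range p).erase 0)
  -- card bound for Sp
  have hSpcard : ∀ p ∈ P, (Sp p).card ≤ (p - 1) / 2 := by
    intro p hp
    have pp := hprime p hp
    have hp2 : p ≠ 2 := hodd p hp
    have h2 : 2 * (Sp p).card ≤ ((Finset.range p).erase 0).card := by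
      apply Finset.mul_card_image_le_card
      intro b hb
      simp only [Finset.mem_image] at hb
      obtain ⟨u, hu, hub⟩ := hb
      simp only [Finset.mem_erase, Finset.mem_range] at hu
      have hup : p - u ≠ u := by
        intro h
        have hpu : p = 2 * u := by omega
        rcases pp.eq_one_or_self_of_dvd 2 ⟨u, hpu⟩ with h' | h'
        · omega
        · exact hp2 h'.symm
      have hmem : ({u, p - u} : Finset ℕ) ⊆ (((Finset.range p).erase 0).filter
          (fun a => (c : ZMod p) * (a : ZMod p) ^ 2 = b)) := by
        intro x hx
        simp only [Finset.mem_insert, Finset.mem_singleton] at hx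
        simp only [Finset.mem_filter, Finset.mem_erase, Finset.mem_range]
        rcases hx with rfl | rfl
        · exact ⟨⟨hu.1, hu.2⟩, hub⟩
        · refine ⟨⟨by omega, by omega⟩, ?_⟩
          have hneg : ((p - u : ℕ) : ZMod p) = -(u : ZMod p) := by
            have h' : ((p - u : ℕ) : ZMod p) = ((p : ℕ) : ZMod p) - (u : ZMod p) := by
              push_cast [Nat.cast_sub (le_of_lt hu.2)]; ring
            simp [h', ZMod.natCast_self]
          rw [hneg, neg_pow, ← hub]; ring_nf
      have : ({u, p - u} : Finset ℕ).card = 2 := by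
        rw [Finset.card_insert_of_notMem (by simp [Ne.symm hup]), Finset.card_singleton]
      calc 2 = ({u, p - u} : Finset ℕ).card := this.symm
        _ ≤ _ := Finset.card_le_card hmem
    have hcr : ((Finset.range p).erase 0).card = p - 1 := by
      rw [Finset.card_erase_of_mem (by simp [pp.pos]), Finset.card_range]
    rw [hcr] at h2
    omega
  -- the residue finset T mod N
  let T : Finset ℕ := (Finset.range N).filter (fun r => ∀ p ∈ P, (r : ZMod p) ∈ Sp p)
  -- card bound for T via CRT injection
  have hTcard : T.card ≤ ∏ p ∈ P, (p - 1) / 2 := by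
    calc T.card ≤ (P.pi (fun p => Sp p)).card := by
          apply Finset.card_le_card_of_injOn (fun r => fun p _ => (r : ZMod p))
          · intro r hr
            simp only [T, Finset.mem_coe, Finset.mem_filter] at hr
            rw [Finset.mem_coe, Finset.mem_pi]
            exact fun p hp => hr.2 p hp
          · intro r hr r' hr' hrr'
            simp only [T, Finset.mem_filter, Finset.mem_range, Finset.mem_coe] at hr hr'
            have key : ∀ a b : ℕ, a ≤ b → a < N → b < N →
                (∀ p ∈ P, (a : ZMod p) = (b : ZMod p)) → a = b := by
              intro a b hab ha hb h
              have hdvd' : ∀ p ∈ P, p ∣ b - a := by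
                intro p hp
                exact (Nat.modEq_iff_dvd' hab).mp ((ZMod.natCast_eq_natCast_iff a b p).mp (h p hp))
              have : N ∣ b - a := by
                rw [hN]
                exact Finset.prod_primes_dvd _ (fun p hp => (hprime p hp).prime) hdvd'
              rcases Nat.eq_zero_or_pos (b - a) with h0 | h0
              · omega
              · have := Nat.le_of_dvd h0 this
                omega
            have h' : ∀ p ∈ P, (r : ZMod p) = (r' : ZMod p) := fun p hp => congrFun (congrFun hrr' p) hp
            rcases le_total r r' with h | h
            · exact key r r' h hr.1 hr'.1 h'
            · exact (key r' r h hr'.1 hr.1 (fun p hp => (h' p hp).symm)).symm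
      _ = ∏ p ∈ P, (Sp p).card := Finset.card_pi _ _
      _ ≤ ∏ p ∈ P, (p - 1) / 2 := Finset.prod_le_prod' hSpcard
  -- main injection
  set M := Nat.floor X with hM
  let F : Finset (ℕ × ℕ) := (Finset.range (M / N + 1)) ×ˢ T
  have hmapsto : ∀ n : ℕ, ((n:ℝ) ≤ X ∧ ∃ s : ℕ, 2 ≤ s ∧ s ≡ s₀ [MOD m] ∧
      Squarefree n ∧ ∃ v : ℕ, 0 < v ∧ 2 ^ (s + 1) + 1 = n * v ^ 2) → (n / N, n % N) ∈ F := by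
    rintro n ⟨hnX, s, hs2, hsm, hsf, v, hv, heq⟩
    refine Finset.mem_product.mpr ⟨?_, ?_⟩
    · rw [Finset.mem_range]
      have h1 : n ≤ M := Nat.le_floor hnX
      have h2 := Nat.div_le_div_right (c := N) h1
      omega
    · rw [Finset.mem_filter, Finset.mem_range]
      refine ⟨Nat.mod_lt _ hNpos, ?_⟩
      intro p hp
      haveI : Fact p.Prime := ⟨hprime p hp⟩
      have h2m : (2 : ZMod p) ^ m = 1 := by
        have h1 : (1:ℕ) ≤ 2 ^ m := Nat.one_le_two_pow
        have h0 : ((2 ^ m - 1 : ℕ) : ZMod p) = 0 :=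
          (ZMod.natCast_eq_zero_iff _ _).mpr (hdvd p hp)
        rw [Nat.cast_sub h1] at h0
        push_cast at h0
        exact sub_eq_zero.mp h0
      have hcne : ((c : ℕ) : ZMod p) ≠ 0 := by
        rw [Ne, ZMod.natCast_eq_zero_iff]; exact hndvd p hp
      have hpow : (2 : ZMod p) ^ (s+1) = (2 : ZMod p) ^ (s₀+1) :=
        pow_eq_pow_of_modEq' h2m (Nat.ModEq.add_right 1 hsm)
      have heqZ : (n : ZMod p) * (v : ZMod p)^2 = ((c : ℕ) : ZMod p) := by
        have hcast := congrArg (Nat.cast : ℕ → ZMod p) heq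
        push_cast at hcast
        have hcc : ((c:ℕ) : ZMod p) = (2:ZMod p)^(s₀+1)+1 := by rw [hc]; push_cast; ring
        rw [hcc, ← hpow]
        exact hcast.symm
      have hvne : (v : ZMod p) ≠ 0 := by
        intro h0
        rw [h0] at heqZ
        simp at heqZ
        exact hcne heqZ.symm
      set w : ZMod p := (v : ZMod p)⁻¹ with hw
      have hwne : w ≠ 0 := inv_ne_zero hvne
      refine Finset.mem_image.mpr ⟨w.val, ?_, ?_⟩
      · simp only [Finset.mem_erase, Finset.mem_range]
        exact ⟨fun h => hwne (by rwa [← ZMod.val_eq_zero]), ZMod.val_lt w⟩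
      · have hval : ((w.val : ℕ) : ZMod p) = w := ZMod.natCast_rightInverse w
        have hmodN : ((n % N : ℕ) : ZMod p) = (n : ZMod p) := by
          have hpN : ((N : ℕ) : ZMod p) = 0 :=
            (ZMod.natCast_eq_zero_iff _ _).mpr (hN ▸ Finset.dvd_prod_of_mem _ hp)
          conv_rhs => rw [← Nat.div_add_mod n N]
          push_cast
          rw [hpN]; ring
        rw [hval, hmodN, hw]
        have hvv : (v:ZMod p)^2 * ((v:ZMod p)⁻¹)^2 = 1 := by
          rw [← mul_pow, mul_inv_cancel₀ hvne, one_pow]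
        rw [← heqZ, mul_assoc, hvv, mul_one]
  have hinj : Nat.card {n : ℕ // (n : ℝ) ≤ X ∧ ∃ s : ℕ, 2 ≤ s ∧ s ≡ s₀ [MOD m] ∧
      Squarefree n ∧ ∃ v : ℕ, 0 < v ∧ 2 ^ (s + 1) + 1 = n * v ^ 2} ≤ F.card := by
    rw [← Nat.card_eq_finsetCard F]
    apply Nat.card_le_card_of_injective
      (fun x => (⟨(x.1 / N, x.1 % N), hmapsto x.1 x.2⟩ : F))
    intro a b hab
    simp only [Subtype.mk.injEq, Prod.mk.injEq] at hab
    apply Subtype.ext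
    calc a.1 = N * (a.1 / N) + a.1 % N := (Nat.div_add_mod _ _).symm
      _ = N * (b.1 / N) + b.1 % N := by rw [hab.1, hab.2]
      _ = b.1 := Nat.div_add_mod _ _
  have hF : F.card = (M / N + 1) * T.card := by
    simp [F, Finset.card_product, Finset.card_range]
  have hb2 : (T.card : ℝ) ≤ (N : ℝ) / 2 ^ k := by
    have h1 : (T.card : ℝ) ≤ ((∏ p ∈ P, (p - 1) / 2 : ℕ) : ℝ) := by exact_mod_cast hTcard
    refine h1.trans ?_
    rw [Nat.cast_prod]
    have h2 : ∏ p ∈ P, (((p - 1) / 2 : ℕ) : ℝ) ≤ ∏ p ∈ P, (p : ℝ) / 2 := by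
      apply Finset.prod_le_prod (fun p _ => by positivity)
      intro p hp
      refine Nat.cast_div_le.trans ?_
      have : (((p - 1 : ℕ)) : ℝ) ≤ (p : ℝ) := by exact_mod_cast Nat.sub_le p 1
      linarith
    refine h2.trans ?_
    rw [Finset.prod_div_distrib, Finset.prod_const, hcard, hN]
    push_cast
    exact le_rfl
  have hNR : (0:ℝ) < N := by exact_mod_cast hNpos
  have hb1 : ((M / N + 1 : ℕ) : ℝ) ≤ X / N + 1 := by
    push_cast
    have h1 : ((M / N : ℕ) : ℝ) ≤ (M : ℝ) / N := Nat.cast_div_le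
    have h2 : (M : ℝ) ≤ X := Nat.floor_le hX.le
    have h3 : (M : ℝ) / N ≤ X / N := by gcongr
    linarith
  calc (Nat.card {n : ℕ // (n : ℝ) ≤ X ∧ ∃ s : ℕ, 2 ≤ s ∧ s ≡ s₀ [MOD m] ∧
        Squarefree n ∧ ∃ v : ℕ, 0 < v ∧ 2 ^ (s + 1) + 1 = n * v ^ 2} : ℝ)
      ≤ (F.card : ℝ) := by exact_mod_cast hinj
    _ = ((M / N + 1 : ℕ) : ℝ) * (T.card : ℝ) := by rw [hF]; push_cast; ring
    _ ≤ (X / N + 1) * ((N : ℝ) / 2 ^ k) := by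
        apply mul_le_mul hb1 hb2 (by positivity) (by positivity)
    _ = X / 2 ^ k + (N : ℝ) / 2 ^ k := by
        field_simp
    _ ≤ X / 2 ^ k + (N : ℝ) := by
        have : (N : ℝ) / 2 ^ k ≤ (N : ℝ) := by
          apply div_le_self hNR.le (one_le_pow₀ (by norm_num))
        linarith
end
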